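/- arXiv:1610.09466 — 2 statements merged into one kernel-verified Lean document; each statement's English description precedes it below -/
import Mathlib

section
/- Let p ≥ 5 be a prime with p ≡ 2 (mod 3). Let θ ∈ ℚ_p and q ∈ ℕ satisfy |θ−1|_p < 1, |(q:ℚ_p)|_p < 1 and (θ−1)(1−θ−q) ≠ 0. If y ∈ ℚ_p is a root of the cubic y³ − (1+θ+θ²)y² − (2θ+1)(1−θ−q)y − (1−θ−q)² = 0, then |y − 3|_p = |q(4θ+5) − (θ−1)(4θ+14) − q²|_p; in particular |y − 3|_p ≤ max{|q|_p, |θ−1|_p} < 1. -/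
/-!
Reduced modulo `p`, with `θ ≡ 1` and `a := 1 - θ - q ≡ 0`, the cubic becomes `y²(y - 3)`, so every
root (integral, the cubic being monic with integral coefficients) is congruent to `0` or to `3`.
A root `y ≡ 0` cannot occur: ℤ_[p] is a valuation ring, and dividing the cubic by `y²` (if `y ∣ a`)
or by `a²` (if `a ∣ y`) leaves an equation whose reduction is a nontrivial zero of the norm form
`x² + xy + y²` of `𝔽_p(ω)`, impossible since `3 ∤ p - 1` makes cubing injective on `𝔽_p`.
For the root `y ≡ 3` write `P(y) - P(3) = (y - 3) Q(y)`; then `Q(y) ≡ P'(3) = 9` is a unit, so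
`|y - 3| = |P(3)|`, and `P(3)` is the displayed expression.
-/

theorem norm_le_one_of_pow_three_eq {K : Type*} [NormedField K] [IsUltrametricDist K]
    {y b c d : K} (hb : ‖b‖ ≤ 1) (hc : ‖c‖ ≤ 1) (hd : ‖d‖ ≤ 1)
    (hy : y ^ 3 = b * y ^ 2 + c * y + d) : ‖y‖ ≤ 1 := by
  by_contra! hy1
  have hy2 : 1 ≤ ‖y‖ ^ 2 := one_le_pow₀ hy1.le
  have : ‖y‖ ^ 3 ≤ ‖y‖ ^ 2 := calc
    ‖y‖ ^ 3 = ‖b * y ^ 2 + c * y + d‖ := by rw [← hy, norm_pow]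
    _ ≤ max (max ‖b * y ^ 2‖ ‖c * y‖) ‖d‖ :=
      (IsUltrametricDist.norm_add_le_max _ _).trans
        (max_le_max_right _ (IsUltrametricDist.norm_add_le_max _ _))
    _ ≤ ‖y‖ ^ 2 := by
      rw [norm_mul, norm_mul, norm_pow]
      refine max_le (max_le ?_ ?_) (hd.trans hy2)
      · exact mul_le_of_le_one_left (by positivity) hb
      · nlinarith [norm_nonneg c]
  nlinarith

namespace ZMod

variable {p : ℕ} [Fact p.Prime]

theorem pow_three_injective (hp : p % 3 = 2) : Function.Injective fun x : ZMod p ↦ x ^ 3 := by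
  have hp1 : 1 ≤ p := (Fact.out : p.Prime).one_le
  -- `3 * (2 * (p / 3) + 1) = 2 * p - 1`, and `x ^ (2 * p - 1) = x` since `x ^ p = x`
  have inv : ∀ x : ZMod p, (x ^ 3) ^ (2 * (p / 3) + 1) = x := fun x ↦ by
    rw [← pow_mul, show 3 * (2 * (p / 3) + 1) = p - 1 + p by omega, pow_add, pow_card,
      ← pow_succ, Nat.sub_add_cancel hp1, pow_card]
  intro x y h
  rw [← inv x, ← inv y]
  exact congrArg (· ^ (2 * (p / 3) + 1)) h

theorem three_ne_zero_of_mod_three_eq_two (hp : p % 3 = 2) : (3 : ZMod p) ≠ 0 := by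
  intro h
  have h3 : p ∣ 3 := by exact_mod_cast (natCast_eq_zero_iff 3 p).mp (by exact_mod_cast h)
  have := Nat.le_of_dvd (by norm_num) h3
  obtain rfl : p = 2 := by omega
  norm_num at h3

theorem eq_zero_of_sq_add_mul_add_sq_eq_zero (hp : p % 3 = 2) {x y : ZMod p}
    (h : x ^ 2 + x * y + y ^ 2 = 0) : x = 0 ∧ y = 0 := by
  have hxy : x = y := pow_three_injective hp (by linear_combination (x - y) * h)
  subst hxy
  have : 3 * x ^ 2 = 0 := by linear_combination h
  simpa [three_ne_zero_of_mod_three_eq_two hp] using this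

end ZMod

/-- The cubic of the Potts–Bethe fixed-point equation, with `a` standing for `1 - θ - q`. -/
def pottsBetheCubic {R : Type*} [CommRing R] (θ a y : R) : R :=
  y ^ 3 - (1 + θ + θ ^ 2) * y ^ 2 - (2 * θ + 1) * a * y - a ^ 2

theorem map_pottsBetheCubic {R S : Type*} [CommRing R] [CommRing S] (f : R →+* S) (θ a y : R) :
    f (pottsBetheCubic θ a y) = pottsBetheCubic (f θ) (f a) (f y) := by
  simp [pottsBetheCubic, map_ofNat]

theorem pottsBetheCubic_three {R : Type*} [CommRing R] (θ q : R) :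
    pottsBetheCubic θ (1 - θ - q) 3 = q * (4 * θ + 5) - (θ - 1) * (4 * θ + 14) - q ^ 2 := by
  rw [pottsBetheCubic]
  ring

namespace PadicInt

variable {p : ℕ} [Fact p.Prime]

@[simp, norm_cast]
theorem coe_ofNat (n : ℕ) [n.AtLeastTwo] : ((ofNat(n) : ℤ_[p]) : ℚ_[p]) = ofNat(n) :=
  rfl

theorem toZMod_eq_zero_iff {x : ℤ_[p]} : toZMod x = 0 ↔ ‖x‖ < 1 := by
  rw [← RingHom.mem_ker, ker_toZMod, IsLocalRing.mem_maximalIdeal, mem_nonunits]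

theorem norm_eq_one_iff_toZMod_ne_zero {x : ℤ_[p]} : ‖x‖ = 1 ↔ toZMod x ≠ 0 := by
  rw [Ne, toZMod_eq_zero_iff, not_lt, (norm_le_one x).ge_iff_eq, eq_comm]

variable {θ a y : ℤ_[p]}

theorem toZMod_ne_zero_of_pottsBetheCubic (hp : p % 3 = 2) (hθ : toZMod θ = 1)
    (ha : toZMod a = 0) (ha0 : a ≠ 0) (hy : pottsBetheCubic θ a y = 0) : toZMod y ≠ 0 := by
  intro hy0
  rcases ValuationRing.dvd_total y a with ⟨v, rfl⟩ | ⟨w, rfl⟩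
  · have hv : y ^ 2 * (y - (1 + θ + θ ^ 2) - (2 * θ + 1) * v - v ^ 2) = 0 := by
      rw [← hy, pottsBetheCubic]; ring
    have hv := congrArg toZMod <|
      (mul_eq_zero.mp hv).resolve_left (pow_ne_zero 2 (left_ne_zero_of_mul ha0))
    simp only [map_sub, map_add, map_mul, map_pow, map_one, map_ofNat, map_zero, hθ, hy0] at hv
    exact one_ne_zero (ZMod.eq_zero_of_sq_add_mul_add_sq_eq_zero hp (x := toZMod v + 1) (y := 1)
      (by linear_combination -hv)).2
  · have hw : a ^ 2 * (a * w ^ 3 - (1 + θ + θ ^ 2) * w ^ 2 - (2 * θ + 1) * w - 1) = 0 := by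
      rw [← hy, pottsBetheCubic]; ring
    have hw := congrArg toZMod <| (mul_eq_zero.mp hw).resolve_left (pow_ne_zero 2 ha0)
    simp only [map_sub, map_add, map_mul, map_pow, map_one, map_ofNat, map_zero, hθ, ha] at hw
    obtain ⟨hw1, hw0⟩ := ZMod.eq_zero_of_sq_add_mul_add_sq_eq_zero hp (x := toZMod w + 1)
      (y := toZMod w) (by linear_combination -hw)
    exact one_ne_zero (by linear_combination hw1 - hw0)

theorem toZMod_eq_three_of_pottsBetheCubic (hp : p % 3 = 2) (hθ : toZMod θ = 1)
    (ha : toZMod a = 0) (ha0 : a ≠ 0) (hy : pottsBetheCubic θ a y = 0) : toZMod y = 3 := by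
  have hred := congrArg toZMod hy
  rw [map_pottsBetheCubic, hθ, ha, map_zero, pottsBetheCubic] at hred
  have : toZMod y ^ 2 * (toZMod y - 3) = 0 := by linear_combination hred
  rcases mul_eq_zero.mp this with h | h
  · exact absurd (pow_eq_zero_iff two_ne_zero |>.mp h)
      (toZMod_ne_zero_of_pottsBetheCubic hp hθ ha ha0 hy)
  · exact sub_eq_zero.mp h

theorem norm_sub_three_eq_norm_pottsBetheCubic_three (hp : p % 3 = 2) (hθ : toZMod θ = 1)
    (ha : toZMod a = 0) (ha0 : a ≠ 0) (hy : pottsBetheCubic θ a y = 0) :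
    ‖y - 3‖ = ‖pottsBetheCubic θ a 3‖ := by
  set Q := y ^ 2 + 3 * y + 9 - (1 + θ + θ ^ 2) * (y + 3) - (2 * θ + 1) * a
  have hfactor : (y - 3) * Q = -pottsBetheCubic θ a 3 := by
    rw [← sub_zero ((y - 3) * Q), ← hy]; simp only [Q, pottsBetheCubic]; ring
  have hQ : ‖Q‖ = 1 := by
    rw [norm_eq_one_iff_toZMod_ne_zero]
    have h3 := toZMod_eq_three_of_pottsBetheCubic hp hθ ha ha0 hy
    simp only [Q, map_sub, map_add, map_mul, map_pow, map_one, map_ofNat, hθ, ha, h3]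
    convert pow_ne_zero 2 (ZMod.three_ne_zero_of_mod_three_eq_two hp) using 1
    ring
  rw [← mul_one ‖y - 3‖, ← hQ, ← norm_mul, hfactor, norm_neg]

theorem norm_pottsBetheCubic_three_le (q : ℤ_[p]) :
    ‖pottsBetheCubic θ (1 - θ - q) 3‖ ≤ max ‖q‖ ‖θ - 1‖ := by
  rw [pottsBetheCubic_three, show q * (4 * θ + 5) - (θ - 1) * (4 * θ + 14) - q ^ 2
      = q * (4 * θ + 5 - q) + -((θ - 1) * (4 * θ + 14)) by ring]
  refine (IsUltrametricDist.norm_add_le_max _ _).trans (max_le_max ?_ ?_) <;>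
    simp only [norm_neg, norm_mul] <;> exact mul_le_of_le_one_right (norm_nonneg _) (norm_le_one _)

end PadicInt

theorem potts_bethe_cubic_root_norm_sub_three_general (p : ℕ) [Fact (Nat.Prime p)]
    (hp3 : p % 3 = 2) (θ : ℚ_[p]) (q : ℕ)
    (hθ : ‖θ - 1‖ < 1) (hq : ‖(q : ℚ_[p])‖ < 1)
    (hne : (θ - 1) * (1 - θ - (q : ℚ_[p])) ≠ 0)
    (y : ℚ_[p])
    (hy : y ^ 3 - (1 + θ + θ ^ 2) * y ^ 2 - (2 * θ + 1) * (1 - θ - (q : ℚ_[p])) * y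
        - (1 - θ - (q : ℚ_[p])) ^ 2 = 0) :
    ‖y - 3‖ = ‖(q : ℚ_[p]) * (4 * θ + 5) - (θ - 1) * (4 * θ + 14) - (q : ℚ_[p]) ^ 2‖ ∧
    ‖y - 3‖ ≤ max ‖(q : ℚ_[p])‖ ‖θ - 1‖ ∧ max ‖(q : ℚ_[p])‖ ‖θ - 1‖ < 1 := by
  have hθ1 : ‖θ‖ ≤ 1 := by
    simpa using (IsUltrametricDist.norm_add_le_max (θ - 1) 1).trans (max_le hθ.le norm_one.le)
  obtain ⟨θ, rfl⟩ : ∃ t : ℤ_[p], (t : ℚ_[p]) = θ := ⟨⟨θ, hθ1⟩, rfl⟩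
  have hy1 : ‖y‖ ≤ 1 := by
    refine norm_le_one_of_pow_three_eq (1 + θ + θ ^ 2 : ℤ_[p]).2
      ((2 * θ + 1) * (1 - θ - q) : ℤ_[p]).2 ((1 - θ - q) ^ 2 : ℤ_[p]).2 ?_
    push_cast
    linear_combination hy
  -- from here on every statement about `ℚ_[p]` is definitionally one about `ℤ_[p]`
  obtain ⟨y, rfl⟩ : ∃ z : ℤ_[p], (z : ℚ_[p]) = y := ⟨⟨y, hy1⟩, rfl⟩
  have hθ' : PadicInt.toZMod θ = 1 := by
    rw [← sub_eq_zero, ← map_one PadicInt.toZMod, ← map_sub, PadicInt.toZMod_eq_zero_iff]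
    exact hθ
  have ha : PadicInt.toZMod (1 - θ - q : ℤ_[p]) = 0 := by
    rw [PadicInt.toZMod_eq_zero_iff, show (1 - θ - q : ℤ_[p]) = -(θ - 1) + -q by ring]
    refine (IsUltrametricDist.norm_add_le_max _ _).trans_lt ?_
    rw [norm_neg, norm_neg]
    exact max_lt hθ hq
  have hE := PadicInt.norm_sub_three_eq_norm_pottsBetheCubic_three hp3 hθ' ha
    (PadicInt.coe_ne_zero.mp (right_ne_zero_of_mul hne)) (PadicInt.coe_eq_zero.mp hy)
  exact ⟨hE.trans (congrArg norm (pottsBetheCubic_three θ q)),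
    hE.trans_le (PadicInt.norm_pottsBetheCubic_three_le q), max_lt hq hθ⟩

/-- any root `y` of the cubic satisfies
`‖y - 3‖ = ‖q(4θ+5) - (θ-1)(4θ+14) - q²‖`, and in particular
`‖y - 3‖ ≤ max ‖q‖ ‖θ-1‖ < 1`. -/
theorem potts_bethe_cubic_root_norm_sub_three (p : ℕ) [Fact (Nat.Prime p)]
    (hp5 : 5 ≤ p) (hp3 : p % 3 = 2) (θ : ℚ_[p]) (q : ℕ)
    (hθ : ‖θ - 1‖ < 1) (hq : ‖(q : ℚ_[p])‖ < 1)
    (hne : (θ - 1) * (1 - θ - (q : ℚ_[p])) ≠ 0)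
    (y : ℚ_[p])
    (hy : y ^ 3 - (1 + θ + θ ^ 2) * y ^ 2 - (2 * θ + 1) * (1 - θ - (q : ℚ_[p])) * y
        - (1 - θ - (q : ℚ_[p])) ^ 2 = 0) :
    ‖y - 3‖ = ‖(q : ℚ_[p]) * (4 * θ + 5) - (θ - 1) * (4 * θ + 14) - (q : ℚ_[p]) ^ 2‖ ∧
    ‖y - 3‖ ≤ max ‖(q : ℚ_[p])‖ ‖θ - 1‖ ∧ max ‖(q : ℚ_[p])‖ ‖θ - 1‖ < 1 :=
  potts_bethe_cubic_root_norm_sub_three_general p hp3 θ q hθ hq hne y hy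
end

section
/- Let p ≥ 5 be a prime with p ≡ 2 (mod 3). Let θ ∈ ℚ_p and q ∈ ℕ satisfy |θ−1|_p < |(q:ℚ_p)|_p < 1 and (θ−1)(1−θ−q) ≠ 0, and let f(x) = ((θx+q−1)/(x+θ+q−2))³ with x⁽∞⁾ = 2−θ−q. Then for every x ∈ ℚ_p with |x − x⁽∞⁾|_p = |q|_p·|θ−1|_p one has |f(x) − 1|_p = 1 > |q|_p; that is, f maps the sphere 𝒜∞⁽²⁾ = {x : |x − x⁽∞⁾|_p = |q|_p|θ−1|_p} into 𝒜₁ = {x : |x−1|_p > |q|_p}. -/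
/-!
Write `x⁽∞⁾ = 2 - θ - q`. Since `θ x + q - 1 - (x - x⁽∞⁾) = (θ - 1)(x - 1)`, the map is
`f(x) = (1 + u)³` with `u = (θ - 1)(x - 1)/(x - x⁽∞⁾)`, and `(1 + u)³ - 1 = u (u² + 3u + 3)`.
On the sphere, `‖x - 1‖ = ‖q‖` by the ultrametric inequality, so `‖u‖ = 1`. Finally
`u² + 3u + 3` is a unit: modulo `p` a root `w` would make `w + 1` a primitive cube root of unity
in `ZMod p`, impossible when `3 ∤ p - 1`.
-/

open IsUltrametricDist

theorem IsUltrametricDist.norm_add_eq_right_of_norm_lt {S : Type*} [SeminormedAddGroup S]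
    [IsUltrametricDist S] {x y : S} (h : ‖x‖ < ‖y‖) : ‖x + y‖ = ‖y‖ := by
  rw [norm_add_eq_max_of_norm_ne_norm h.ne, max_eq_right h.le]

theorem ZMod.sq_add_three_mul_add_three_ne_zero {p : ℕ} [Fact p.Prime] (hp : p % 3 = 2)
    (w : ZMod p) : w ^ 2 + 3 * w + 3 ≠ 0 := by
  intro hw
  have hcube : (w + 1) ^ 3 = 1 := by linear_combination (w + 1 - 1) * hw
  have hw1 : w + 1 ≠ 1 := by
    intro h
    obtain rfl : w = 0 := by linear_combination h
    have h3 : ((3 : ℕ) : ZMod p) = 0 := by simpa using hw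
    rw [ZMod.natCast_eq_zero_iff, Nat.prime_dvd_prime_iff_eq Fact.out Nat.prime_three] at h3
    omega
  have hw0 : w + 1 ≠ 0 := by
    intro h
    simp [h] at hcube
  have hdvd : 3 ∣ p - 1 := orderOf_eq_prime hcube hw1 ▸ ZMod.orderOf_dvd_card_sub_one hw0
  omega

theorem PadicInt.norm_sq_add_three_mul_add_three {p : ℕ} [Fact p.Prime] (hp : p % 3 = 2)
    (v : ℤ_[p]) : ‖v ^ 2 + 3 * v + 3‖ = 1 := by
  rw [← PadicInt.isUnit_iff, ← IsLocalRing.notMem_maximalIdeal, ← PadicInt.ker_toZMod,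
    RingHom.mem_ker]
  simpa [map_ofNat] using ZMod.sq_add_three_mul_add_three_ne_zero hp (PadicInt.toZMod v)

theorem Padic.norm_one_add_pow_three_sub_one {p : ℕ} [Fact p.Prime] (hp : p % 3 = 2)
    {u : ℚ_[p]} (hu : ‖u‖ ≤ 1) : ‖(1 + u) ^ 3 - 1‖ = ‖u‖ := by
  have hunit : ‖u ^ 2 + 3 * u + 3‖ = 1 := by
    have h := PadicInt.norm_sq_add_three_mul_add_three hp ⟨u, hu⟩
    push_cast [PadicInt.norm_def] at h
    exact h
  rw [show (1 + u) ^ 3 - 1 = u * (u ^ 2 + 3 * u + 3) by ring, norm_mul, hunit, mul_one]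

theorem potts_bethe_maps_Ainf2_into_A1_general (p : ℕ) [Fact (Nat.Prime p)]
    (hp3 : p % 3 = 2) (θ : ℚ_[p]) (q : ℕ)
    (hθq : ‖θ - 1‖ < ‖(q : ℚ_[p])‖) (hq : ‖(q : ℚ_[p])‖ < 1)
    (hne : (θ - 1) * (1 - θ - (q : ℚ_[p])) ≠ 0) :
    ∀ x : ℚ_[p], ‖x - (2 - θ - (q : ℚ_[p]))‖ = ‖(q : ℚ_[p])‖ * ‖θ - 1‖ →
      ‖((θ * x + (q : ℚ_[p]) - 1) / (x + θ + (q : ℚ_[p]) - 2)) ^ 3 - 1‖ = 1 ∧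
      ‖(q : ℚ_[p])‖ < 1 := by
  intro x hx
  refine ⟨?_, hq⟩
  have hθ : ‖θ - 1‖ ≠ 0 := norm_ne_zero_iff.mpr (left_ne_zero_of_mul hne)
  have hq0 : ‖(q : ℚ_[p])‖ ≠ 0 := (hθq.trans_le' (norm_nonneg _)).ne'
  have hden_eq : x + θ + q - 2 = x - (2 - θ - q) := by ring
  have hsphere_lt : ‖x - (2 - θ - q)‖ < ‖(q : ℚ_[p])‖ := by
    rw [hx]
    exact mul_lt_of_lt_one_right (by positivity) (hθq.trans hq)
  have hx1 : ‖x - 1‖ = ‖(q : ℚ_[p])‖ := by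
    have hcentre : ‖(θ - 1) + q‖ = ‖(q : ℚ_[p])‖ := norm_add_eq_right_of_norm_lt hθq
    rw [show x - 1 = (x - (2 - θ - q)) + -((θ - 1) + q) by ring,
      norm_add_eq_right_of_norm_lt (by rwa [norm_neg, hcentre]), norm_neg, hcentre]
  have hden : x + θ + q - 2 ≠ 0 := by
    rw [hden_eq, ← norm_ne_zero_iff, hx]
    exact mul_ne_zero hq0 hθ
  set u := (θ - 1) * (x - 1) / (x + θ + q - 2) with hu_def
  have hu : ‖u‖ = 1 := by
    rw [hu_def, norm_div, norm_mul, hx1, hden_eq, hx, mul_comm, div_self (mul_ne_zero hq0 hθ)]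
  have hf : (θ * x + q - 1) / (x + θ + q - 2) = 1 + u := by
    rw [hu_def]
    field_simp
    ring
  rw [hf, Padic.norm_one_add_pow_three_sub_one hp3 hu.le, hu]

/-- the Potts–Bethe mapping sends the sphere
`𝒜∞⁽²⁾ = {x : ‖x-x⁽∞⁾‖ = ‖q‖·‖θ-1‖}` (with `x⁽∞⁾ = 2-θ-q`) into
`𝒜₁ = {x : ‖x-1‖ > ‖q‖}`: indeed `‖f(x)-1‖ = 1 > ‖q‖` there. -/
theorem potts_bethe_maps_Ainf2_into_A1 (p : ℕ) [Fact (Nat.Prime p)]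
    (hp5 : 5 ≤ p) (hp3 : p % 3 = 2) (θ : ℚ_[p]) (q : ℕ)
    (hθq : ‖θ - 1‖ < ‖(q : ℚ_[p])‖) (hq : ‖(q : ℚ_[p])‖ < 1)
    (hne : (θ - 1) * (1 - θ - (q : ℚ_[p])) ≠ 0) :
    ∀ x : ℚ_[p], ‖x - (2 - θ - (q : ℚ_[p]))‖ = ‖(q : ℚ_[p])‖ * ‖θ - 1‖ →
      ‖((θ * x + (q : ℚ_[p]) - 1) / (x + θ + (q : ℚ_[p]) - 2)) ^ 3 - 1‖ = 1 ∧
      ‖(q : ℚ_[p])‖ < 1 :=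
  potts_bethe_maps_Ainf2_into_A1_general p hp3 θ q hθq hq hne
end
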